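/- For every integer p ≥ 3 and every fixed β > β*(p): as β_0 decreases to β*(p) from above, sup_{x∈[−1,1]} H_{β_0,p}(x) → 0 and sup_{x ∈ η_p^{−1}((β,∞))} H_{β_0,p}(x) → 0, so that the Bahadur slope of the maximum pseudolikelihood test, 2[sup_{x∈[−1,1]} H_{β_0,p}(x) − sup_{x ∈ η_p^{−1}((β,∞))} H_{β_0,p}(x)], tends to 0; while the Bahadur slope of the maximum likelihood test, 2[sup_{x∈[−1,1]} H_{β_0,p}(x) − sup_{x ∈ (m_*(β,p),1]} H_{β_0,p}(x)], tends to −2 H_{β*(p),p}(m_*(β,p)), which is strictly positive. -/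

import Mathlib

/-!
Since `H_{β₀} = H_{β*} + (β₀ - β*) xᵖ` and `H_{β*} ≤ 0` on `[-1, 1]`, the supremum of `H_{β₀}`
over any `s ⊆ [-1, 1]` with `0 ∈ closure s` lies in `[0, β₀ - β*]` (recall `H_{β₀}(0) = 0`).
For `p ≥ 3`, `η_p(t) ≥ 1 / (2 p t)` blows up at `0⁺`, so `η_p⁻¹((β, ∞))` is such a set.
On `(m, 1]`, `H_{β₀} = H_β - (β - β₀) xᵖ` is bounded by its value at `m` when `β₀ ≤ β`, so the
ML supremum equals `H_{β₀}(m)`, which tends to `H_{β*}(m)`. The maximiser `m` is interior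
because `I' = arctanh` blows up at `1`; if `H_{β*}(m) = 0`, then `m` would maximise `H_{β*}` too,
and the stationarity equations `β p m^{p-1} = arctanh m = β* p m^{p-1}` would force `β = β*`.
-/

open Real Set Filter

/-- `I(x) = ½[(1+x)log(1+x) + (1−x)log(1−x)]` (with `Real.log 0 = 0`). -/
noncomputable def bahI (x : ℝ) : ℝ :=
  ((1 + x) * Real.log (1 + x) + (1 - x) * Real.log (1 - x)) / 2

/-- `H_{β,p}(x) = β xᵖ − I(x)`. -/
noncomputable def bahH (β : ℝ) (p : ℕ) (x : ℝ) : ℝ := β * x ^ p - bahI x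

/-- `β*(p) = sup {β ≥ 0 : sup_{x∈[−1,1]} H_{β,p}(x) = 0}`. -/
noncomputable def betaStar (p : ℕ) : ℝ :=
  sSup {β : ℝ | 0 ≤ β ∧ sSup (bahH β p '' Set.Icc (-1 : ℝ) 1) = 0}

/-- inverse hyperbolic tangent. -/
noncomputable def arctanh (x : ℝ) : ℝ := Real.log ((1 + x) / (1 - x)) / 2

/-- `η_p(t) = p⁻¹ t^{1−p} arctanh t` for `t ≠ 0`, and `η_p(0) = 0`. -/
noncomputable def etaFn (p : ℕ) (t : ℝ) : ℝ :=
  if t = 0 then 0 else (p : ℝ)⁻¹ * t ^ (1 - (p : ℤ)) * arctanh t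

open Topology

lemma bahI_nonneg {x : ℝ} (hx : x ∈ Icc (-1 : ℝ) 1) : 0 ≤ bahI x := by
  have h₁ := Real.self_sub_one_le_mul_log (x := 1 + x) (by linarith [hx.1])
  have h₂ := Real.self_sub_one_le_mul_log (x := 1 - x) (by linarith [hx.2])
  unfold bahI
  linarith

lemma continuous_bahI : Continuous bahI := by
  unfold bahI
  exact (((continuous_const.add continuous_id).mul_log).add
    ((continuous_const.sub continuous_id).mul_log)).div_const 2

lemma arctanh_eq {x : ℝ} (hx : x ∈ Ioo (-1 : ℝ) 1) :
    arctanh x = (Real.log (1 + x) - Real.log (1 - x)) / 2 := by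
  rw [arctanh, Real.log_div (by linarith [hx.1]) (by linarith [hx.2])]

lemma half_le_arctanh {t : ℝ} (h₀ : 0 ≤ t) (h₁ : t < 1) : t / 2 ≤ arctanh t := by
  have hlog₁ : 0 ≤ Real.log (1 + t) := Real.log_nonneg (by linarith)
  have hlog₂ : Real.log (1 - t) ≤ -t := by
    linarith [Real.log_le_sub_one_of_pos (x := 1 - t) (by linarith)]
  rw [arctanh_eq ⟨by linarith, h₁⟩]
  linarith

lemma hasDerivAt_bahI {x : ℝ} (hx : x ∈ Ioo (-1 : ℝ) 1) : HasDerivAt bahI (arctanh x) x := by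
  have h₁ := (Real.hasDerivAt_mul_log (x := 1 + x) (by linarith [hx.1])).comp x
    ((hasDerivAt_id x).const_add 1)
  have h₂ := (Real.hasDerivAt_mul_log (x := 1 - x) (by linarith [hx.2])).comp x
    ((hasDerivAt_id x).const_sub 1)
  rw [arctanh_eq hx]
  exact ((h₁.add h₂).div_const 2).congr_deriv (by ring)

lemma bahH_zero (β : ℝ) {p : ℕ} (hp : p ≠ 0) : bahH β p 0 = 0 := by
  simp [bahH, bahI, hp]

lemma bahH_eq_add_mul_pow (β β₀ : ℝ) (p : ℕ) (x : ℝ) :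
    bahH β p x = bahH β₀ p x + (β - β₀) * x ^ p := by
  unfold bahH
  ring

lemma continuous_bahH (β : ℝ) (p : ℕ) : Continuous (bahH β p) :=
  (continuous_const.mul (continuous_pow p)).sub continuous_bahI

lemma hasDerivAt_bahH (β : ℝ) (p : ℕ) {x : ℝ} (hx : x ∈ Ioo (-1 : ℝ) 1) :
    HasDerivAt (bahH β p) (β * (p * x ^ (p - 1)) - arctanh x) x :=
  ((hasDerivAt_pow p x).const_mul β).sub (hasDerivAt_bahI hx)

lemma pow_le_one_of_mem_Icc {x : ℝ} (hx : x ∈ Icc (-1 : ℝ) 1) (p : ℕ) : x ^ p ≤ 1 :=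
  calc x ^ p ≤ |x| ^ p := (le_abs_self _).trans (abs_pow x p).le
    _ ≤ 1 := pow_le_one₀ (abs_nonneg x) (abs_le.2 hx)

lemma bahH_le {β : ℝ} (hβ : 0 ≤ β) (p : ℕ) {x : ℝ} (hx : x ∈ Icc (-1 : ℝ) 1) :
    bahH β p x ≤ β := by
  have := mul_le_of_le_one_right hβ (pow_le_one_of_mem_Icc hx p)
  have := bahI_nonneg hx
  unfold bahH
  linarith

lemma le_csSup_image_of_mem_closure {α γ : Type*} [TopologicalSpace α]
    [ConditionallyCompleteLattice γ] [TopologicalSpace γ] [ClosedIicTopology γ]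
    {f : α → γ} {s : Set α} {x : α} (hf : ContinuousWithinAt f s x) (hx : x ∈ closure s)
    (hb : BddAbove (f '' s)) : f x ≤ sSup (f '' s) :=
  closure_minimal (fun _ hy => le_csSup hb hy) isClosed_Iic (hf.mem_closure_image hx)

lemma sSup_bahH_image_Icc_eq_zero_iff {β : ℝ} (hβ : 0 ≤ β) {p : ℕ} (hp : p ≠ 0) :
    sSup (bahH β p '' Icc (-1 : ℝ) 1) = 0 ↔ ∀ x ∈ Icc (-1 : ℝ) 1, bahH β p x ≤ 0 := by
  have hb : BddAbove (bahH β p '' Icc (-1 : ℝ) 1) :=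
    ⟨β, forall_mem_image.2 fun _ hx => bahH_le hβ p hx⟩
  have h₀ : (0 : ℝ) ∈ Icc (-1 : ℝ) 1 := ⟨by norm_num, by norm_num⟩
  refine ⟨fun h x hx => h ▸ le_csSup hb (mem_image_of_mem _ hx), fun h => le_antisymm ?_ ?_⟩
  · exact csSup_le ⟨_, mem_image_of_mem _ h₀⟩ (forall_mem_image.2 h)
  · exact bahH_zero β hp ▸ le_csSup hb (mem_image_of_mem _ h₀)

lemma zero_mem_betaStar_set {p : ℕ} (hp : p ≠ 0) :
    (0 : ℝ) ∈ {β : ℝ | 0 ≤ β ∧ sSup (bahH β p '' Icc (-1 : ℝ) 1) = 0} :=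
  ⟨le_rfl, (sSup_bahH_image_Icc_eq_zero_iff le_rfl hp).2 fun x hx => by
    simpa [bahH] using bahI_nonneg hx⟩

lemma bddAbove_betaStar_set {p : ℕ} (hp : p ≠ 0) :
    BddAbove {β : ℝ | 0 ≤ β ∧ sSup (bahH β p '' Icc (-1 : ℝ) 1) = 0} :=
  ⟨bahI 1, fun c ⟨hc, hsup⟩ => by
    simpa [bahH] using (sSup_bahH_image_Icc_eq_zero_iff hc hp).1 hsup 1 ⟨by norm_num, le_rfl⟩⟩

lemma betaStar_nonneg {p : ℕ} (hp : p ≠ 0) : 0 ≤ betaStar p :=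
  le_csSup (bddAbove_betaStar_set hp) (zero_mem_betaStar_set hp)

lemma bahH_betaStar_nonpos {p : ℕ} (hp : p ≠ 0) {x : ℝ} (hx : x ∈ Icc (-1 : ℝ) 1) :
    bahH (betaStar p) p x ≤ 0 := by
  have hI := bahI_nonneg hx
  rcases le_or_gt (x ^ p) 0 with hxp | hxp
  · have := mul_nonpos_of_nonneg_of_nonpos (betaStar_nonneg hp) hxp
    unfold bahH
    linarith
  · have hle : betaStar p ≤ bahI x / x ^ p := by
      refine csSup_le ⟨0, zero_mem_betaStar_set hp⟩ fun c ⟨hc, hsup⟩ => ?_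
      have := (sSup_bahH_image_Icc_eq_zero_iff hc hp).1 hsup x hx
      rw [le_div_iff₀ hxp]
      unfold bahH at this
      linarith
    have := (le_div_iff₀ hxp).1 hle
    unfold bahH
    linarith

lemma bahH_le_sub_betaStar {p : ℕ} (hp : p ≠ 0) {β₀ : ℝ} (hβ₀ : betaStar p ≤ β₀) {x : ℝ}
    (hx : x ∈ Icc (-1 : ℝ) 1) : bahH β₀ p x ≤ β₀ - betaStar p := by
  have h₁ := bahH_betaStar_nonpos hp hx
  have h₂ := mul_le_of_le_one_right (sub_nonneg.2 hβ₀) (pow_le_one_of_mem_Icc hx p)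
  rw [bahH_eq_add_mul_pow β₀ (betaStar p)]
  linarith

lemma sSup_bahH_image_mem_Icc {p : ℕ} (hp : p ≠ 0) {β₀ : ℝ} (hβ₀ : betaStar p ≤ β₀)
    {s : Set ℝ} (hs : s ⊆ Icc (-1 : ℝ) 1) (h₀ : (0 : ℝ) ∈ closure s) :
    sSup (bahH β₀ p '' s) ∈ Icc 0 (β₀ - betaStar p) := by
  have hle : ∀ x ∈ s, bahH β₀ p x ≤ β₀ - betaStar p :=
    fun x hx => bahH_le_sub_betaStar hp hβ₀ (hs hx)
  refine ⟨?_, csSup_le ((closure_nonempty_iff.1 ⟨0, h₀⟩).image _) (forall_mem_image.2 hle)⟩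
  rw [← bahH_zero β₀ hp]
  exact le_csSup_image_of_mem_closure (continuous_bahH β₀ p).continuousWithinAt h₀
    ⟨_, forall_mem_image.2 hle⟩

lemma tendsto_sSup_bahH_image {p : ℕ} (hp : p ≠ 0) {s : Set ℝ} (hs : s ⊆ Icc (-1 : ℝ) 1)
    (h₀ : (0 : ℝ) ∈ closure s) :
    Tendsto (fun β₀ => sSup (bahH β₀ p '' s)) (𝓝[>] betaStar p) (𝓝 0) := by
  have hsub : Tendsto (fun β₀ => β₀ - betaStar p) (𝓝[>] betaStar p) (𝓝 0) := by
    simpa using ((continuous_sub_right (betaStar p)).tendsto (betaStar p)).mono_left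
      nhdsWithin_le_nhds
  have hmem : ∀ᶠ β₀ in 𝓝[>] betaStar p, sSup (bahH β₀ p '' s) ∈ Icc 0 (β₀ - betaStar p) :=
    eventually_nhdsWithin_of_forall fun _ h => sSup_bahH_image_mem_Icc hp h.le hs h₀
  exact tendsto_of_tendsto_of_tendsto_of_le_of_le' tendsto_const_nhds hsub
    (hmem.mono fun _ h => h.1) (hmem.mono fun _ h => h.2)

lemma inv_le_etaFn {p : ℕ} (hp : 3 ≤ p) {t : ℝ} (ht : t ∈ Ioo (0 : ℝ) 1) :
    (2 * p : ℝ)⁻¹ * t⁻¹ ≤ etaFn p t := by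
  obtain ⟨ht₀, ht₁⟩ := ht
  have hzpow : t⁻¹ ≤ t ^ (1 - (p : ℤ)) * t := by
    rw [← zpow_neg_one, ← zpow_add_one₀ ht₀.ne']
    exact zpow_le_zpow_right_of_le_one₀ ht₀ ht₁.le (by omega)
  rw [etaFn, if_neg ht₀.ne']
  calc (2 * p : ℝ)⁻¹ * t⁻¹ ≤ (p : ℝ)⁻¹ * (t ^ (1 - (p : ℤ)) * t) / 2 := by
        rw [mul_inv, mul_comm (2 : ℝ)⁻¹, mul_assoc, mul_div_assoc]
        gcongr
        linarith
    _ ≤ (p : ℝ)⁻¹ * t ^ (1 - (p : ℤ)) * arctanh t := by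
        rw [mul_assoc, mul_div_assoc, mul_div_assoc]
        gcongr
        exact half_le_arctanh ht₀.le ht₁

lemma tendsto_etaFn_nhdsGT_zero {p : ℕ} (hp : 3 ≤ p) : Tendsto (etaFn p) (𝓝[>] 0) atTop :=
  tendsto_atTop_mono' _ (eventually_of_mem (Ioo_mem_nhdsGT one_pos) fun _ => inv_le_etaFn hp)
    (tendsto_inv_nhdsGT_zero.const_mul_atTop (by positivity))

lemma zero_mem_closure_setOf_lt_etaFn {p : ℕ} (hp : 3 ≤ p) (β : ℝ) :
    (0 : ℝ) ∈ closure {t ∈ Icc (-1 : ℝ) 1 | β < etaFn p t} :=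
  mem_closure_of_tendsto (tendsto_id.mono_left nhdsWithin_le_nhds)
    ((eventually_nhdsWithin_of_eventually_nhds
      (Icc_mem_nhds (by norm_num : (-1 : ℝ) < 0) one_pos)).and
      ((tendsto_etaFn_nhdsGT_zero hp).eventually_gt_atTop β))

lemma not_isMaxOn_bahH_one (β : ℝ) (p : ℕ) : ¬IsMaxOn (bahH β p) (Icc (-1 : ℝ) 1) 1 := by
  intro hmax
  set c := |β| * p
  set a := 1 - exp (-(2 * c))
  have hc : 0 ≤ c := by positivity
  have ha₀ : 0 ≤ a := sub_nonneg.2 (exp_le_one_iff.2 (by linarith))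
  have ha₁ : a < 1 := sub_lt_self 1 (exp_pos _)
  -- on `(a, 1)`, `arctanh > c` while the derivative of `β xᵖ` is at most `c`
  have hderiv : ∀ ξ ∈ Ioo a 1, deriv (bahH β p) ξ < 0 := by
    intro ξ ⟨haξ, hξ₁⟩
    have hξ₀ : 0 ≤ ξ := by linarith
    rw [(hasDerivAt_bahH β p ⟨by linarith, hξ₁⟩).deriv]
    have hpow : β * (p * ξ ^ (p - 1)) ≤ c :=
      calc β * (p * ξ ^ (p - 1)) ≤ |β| * (p * ξ ^ (p - 1)) :=
            mul_le_mul_of_nonneg_right (le_abs_self β) (by positivity)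
        _ ≤ c :=
            mul_le_mul_of_nonneg_left
              (mul_le_of_le_one_right (by positivity) (pow_le_one₀ hξ₀ hξ₁.le))
              (abs_nonneg β)
    have hlog₁ : 0 ≤ Real.log (1 + ξ) := Real.log_nonneg (by linarith)
    have hlog₂ : Real.log (1 - ξ) < -(2 * c) := by
      rw [← Real.log_exp (-(2 * c))]
      exact Real.log_lt_log (by linarith) (by linarith)
    rw [arctanh_eq ⟨by linarith, hξ₁⟩]
    linarith
  have hanti : StrictAntiOn (bahH β p) (Icc a 1) :=
    strictAntiOn_of_deriv_neg (convex_Icc a 1) (continuous_bahH β p).continuousOn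
      (by rwa [interior_Icc])
  exact (hanti (left_mem_Icc.2 ha₁.le) (right_mem_Icc.2 ha₁.le) ha₁).not_ge
    (hmax ⟨by linarith, ha₁.le⟩)

lemma arctanh_eq_of_isMaxOn_bahH {β : ℝ} {p : ℕ} {m : ℝ} (hm : m ∈ Ioo (-1 : ℝ) 1)
    (hmax : IsMaxOn (bahH β p) (Icc (-1 : ℝ) 1) m) : β * (p * m ^ (p - 1)) = arctanh m := by
  have := (hmax.isLocalMax (Icc_mem_nhds hm.1 hm.2)).hasDerivAt_eq_zero
    (hasDerivAt_bahH β p hm)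
  linarith

lemma bahH_betaStar_neg {p : ℕ} (hp : p ≠ 0) {β m : ℝ} (hβ : betaStar p < β)
    (hm : m ∈ Ioo (0 : ℝ) 1) (hmax : IsMaxOn (bahH β p) (Icc (-1 : ℝ) 1) m) :
    bahH (betaStar p) p m < 0 := by
  have hm' : m ∈ Ioo (-1 : ℝ) 1 := ⟨by linarith [hm.1], hm.2⟩
  refine (bahH_betaStar_nonpos hp (Ioo_subset_Icc_self hm')).lt_of_ne fun h₀ => hβ.ne' ?_
  have hmax' : IsMaxOn (bahH (betaStar p) p) (Icc (-1 : ℝ) 1) m :=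
    fun x hx => h₀ ▸ bahH_betaStar_nonpos hp hx
  have hpos : 0 < (p : ℝ) * m ^ (p - 1) := by
    have := hm.1
    positivity
  exact mul_right_cancel₀ hpos.ne'
    ((arctanh_eq_of_isMaxOn_bahH hm' hmax).trans (arctanh_eq_of_isMaxOn_bahH hm' hmax').symm)

lemma sSup_bahH_image_Ioc {β β₀ : ℝ} (hβ₀ : β₀ ≤ β) {p : ℕ} {m : ℝ}
    (hm : m ∈ Ico (0 : ℝ) 1) (hmax : IsMaxOn (bahH β p) (Icc (-1 : ℝ) 1) m) :
    sSup (bahH β₀ p '' Ioc m 1) = bahH β₀ p m := by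
  have hle : ∀ x ∈ Ioc m 1, bahH β₀ p x ≤ bahH β₀ p m := by
    intro x hx
    have h₁ : bahH β p x ≤ bahH β p m := hmax ⟨by linarith [hx.1, hm.1], hx.2⟩
    have h₂ : m ^ p ≤ x ^ p := pow_le_pow_left₀ hm.1 hx.1.le p
    rw [bahH_eq_add_mul_pow β β₀ p x, bahH_eq_add_mul_pow β β₀ p m] at h₁
    nlinarith
  refine le_antisymm (csSup_le ((nonempty_Ioc.2 hm.2).image _) (forall_mem_image.2 hle)) ?_
  refine le_csSup_image_of_mem_closure (continuous_bahH β₀ p).continuousWithinAt ?_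
    ⟨_, forall_mem_image.2 hle⟩
  rw [closure_Ioc hm.2.ne]
  exact left_mem_Icc.2 hm.2.le

lemma tendsto_sSup_bahH_image_Ioc {β β' : ℝ} (hβ' : β' < β) {p : ℕ} {m : ℝ}
    (hm : m ∈ Ico (0 : ℝ) 1) (hmax : IsMaxOn (bahH β p) (Icc (-1 : ℝ) 1) m) :
    Tendsto (fun β₀ => sSup (bahH β₀ p '' Ioc m 1)) (𝓝 β') (𝓝 (bahH β' p m)) := by
  have hcont : Continuous fun β₀ => bahH β₀ p m := by
    unfold bahH
    fun_prop
  refine (hcont.tendsto β').congr' ?_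
  filter_upwards [eventually_lt_nhds hβ'] with β₀ h
  exact (sSup_bahH_image_Ioc h.le hm hmax).symm

/-- For `p ≥ 3` and a fixed `β > β*(p)` with positive global maximizer `m = m_*(β,p)` of
`H_{β,p}` on `[−1,1]`: as `β₀ ↓ β*(p)`, `sup_{[−1,1]} H_{β₀,p} → 0` and
`sup_{η_p⁻¹((β,∞))} H_{β₀,p} → 0`, hence the MPL Bahadur slope
`2[sup_{[−1,1]} H_{β₀,p} − sup_{η_p⁻¹((β,∞))} H_{β₀,p}]` tends to `0`, while the ML
Bahadur slope `2[sup_{[−1,1]} H_{β₀,p} − sup_{(m,1]} H_{β₀,p}]` tends to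
`−2 H_{β*(p),p}(m)`, which is strictly positive. -/
theorem statement12 (p : ℕ) (hp : 3 ≤ p) (β : ℝ) (hβ : betaStar p < β)
    (m : ℝ) (hm0 : 0 < m) (hm1 : m ∈ Set.Icc (-1 : ℝ) 1)
    (hmax : IsMaxOn (bahH β p) (Set.Icc (-1 : ℝ) 1) m) :
    Tendsto (fun β₀ => sSup (bahH β₀ p '' Set.Icc (-1 : ℝ) 1))
      (nhdsWithin (betaStar p) (Set.Ioi (betaStar p))) (nhds 0) ∧
    Tendsto (fun β₀ => sSup (bahH β₀ p '' {t ∈ Set.Icc (-1 : ℝ) 1 | β < etaFn p t}))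
      (nhdsWithin (betaStar p) (Set.Ioi (betaStar p))) (nhds 0) ∧
    Tendsto (fun β₀ => 2 * (sSup (bahH β₀ p '' Set.Icc (-1 : ℝ) 1)
        - sSup (bahH β₀ p '' {t ∈ Set.Icc (-1 : ℝ) 1 | β < etaFn p t})))
      (nhdsWithin (betaStar p) (Set.Ioi (betaStar p))) (nhds 0) ∧
    Tendsto (fun β₀ => 2 * (sSup (bahH β₀ p '' Set.Icc (-1 : ℝ) 1)
        - sSup (bahH β₀ p '' Set.Ioc m 1)))
      (nhdsWithin (betaStar p) (Set.Ioi (betaStar p)))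
      (nhds (-2 * bahH (betaStar p) p m)) ∧
    0 < -2 * bahH (betaStar p) p m := by
  have hp₀ : p ≠ 0 := by omega
  have hm : m ∈ Ioo (0 : ℝ) 1 :=
    ⟨hm0, hm1.2.lt_of_ne fun h => not_isMaxOn_bahH_one β p (h ▸ hmax)⟩
  have hIcc := tendsto_sSup_bahH_image hp₀ subset_rfl
    (subset_closure ⟨by norm_num, by norm_num⟩ : (0 : ℝ) ∈ closure (Icc (-1 : ℝ) 1))
  have hEta := tendsto_sSup_bahH_image hp₀ (sep_subset _ _)
    (zero_mem_closure_setOf_lt_etaFn hp β)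
  have hIoc := (tendsto_sSup_bahH_image_Ioc hβ (Ioo_subset_Ico_self hm) hmax).mono_left
    (nhdsWithin_le_nhds (s := Ioi (betaStar p)))
  refine ⟨hIcc, hEta, by simpa using (hIcc.sub hEta).const_mul 2, ?_,
    by linarith [bahH_betaStar_neg hp₀ hβ hm hmax]⟩
  simpa [neg_mul] using (hIcc.sub hIoc).const_mul 2
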